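/- For every integer d > 2, O_d = 1 + Σ_{ℓ=1}^{d−2} Σ_{k=1}^{d−2} O(d−ℓ, d−1, k, d). -/
import Mathlib


open scoped BigOperators

/-- The largest `k` such that `C(k,t) ≤ a` (used in the greedy binomial expansion). -/
def maxBinomIdx (a t : ℕ) : ℕ :=
  ((Finset.range (a + t + 1)).filter fun k => Nat.choose k t ≤ a).sup id

/-- `a^{⟨t⟩}`, computed via the (unique, hence greedy) binomial expansion of `a` in base `t`:
if `a = C(k_t,t) + C(k_{t-1},t-1) + ⋯ + C(k_j,j)` with `k_t > ⋯ > k_j ≥ j ≥ 1`, then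
`a^{⟨t⟩} = C(k_t+1,t+1) + ⋯ + C(k_j+1,j+1)`; by convention `0^{⟨t⟩} = 0`. -/
def macaulay : ℕ → ℕ → ℕ
  | _, 0 => 0
  | a, t + 1 =>
    if a = 0 then 0
    else
      Nat.choose (maxBinomIdx a (t + 1) + 1) (t + 2) +
        macaulay (a - Nat.choose (maxBinomIdx a (t + 1)) (t + 1)) t

/-- A finite O-sequence: `h 0 = 1`, `h` vanishes after its first zero, `h` is eventually zero,
and `h (t+1) ≤ (h t)^{⟨t⟩}` for every `t ≥ 1`. -/
def IsFiniteOSeq (h : ℕ → ℕ) : Prop :=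
  h 0 = 1 ∧ (∀ t, h t = 0 → h (t + 1) = 0) ∧ (∃ N, ∀ t, N ≤ t → h t = 0) ∧
    ∀ t, 1 ≤ t → h (t + 1) ≤ macaulay (h t) t

/-- The multiplicity (length) `d = Σ_t h t` of a finite O-sequence. -/
noncomputable def mult (h : ℕ → ℕ) : ℕ := ∑ᶠ t, h t

/-- The socle degree `s = max {t : h t ≠ 0}` of a finite O-sequence. -/
noncomputable def socleDeg (h : ℕ → ℕ) : ℕ := sSup {t | h t ≠ 0}

/-- `countO p n k d = O(p,n,k,d)`: for `p ≥ 1`, `n ≥ 0`, `k ≥ 0`, `d ≥ 1`, the number of finite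
O-sequences `h` of multiplicity `d` and socle degree at most `n` with `h i = C(p-1+i,i)` for
`0 ≤ i ≤ k` and `h i < C(p-1+i,i)` for `i > k`; moreover `O(0,n,0,1) = 1` for `n ≥ 0`,
`O(0,n,k,d) = 0` for `k > 0` or `d > 1`, and `O(p,n,k,d) = 0` if `p < 0`, `n < 0`, `k < 0`
or `d ≤ 0`. -/
noncomputable def countO (p n k d : ℤ) : ℕ :=
  if 1 ≤ p ∧ 0 ≤ n ∧ 0 ≤ k ∧ 1 ≤ d then
    {h : ℕ → ℕ | IsFiniteOSeq h ∧ mult h = d.toNat ∧ socleDeg h ≤ n.toNat ∧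
        (∀ i : ℕ, (i : ℤ) ≤ k → h i = Nat.choose (p.toNat - 1 + i) i) ∧
        (∀ i : ℕ, k < (i : ℤ) → h i < Nat.choose (p.toNat - 1 + i) i)}.ncard
  else if p = 0 ∧ 0 ≤ n ∧ k = 0 ∧ d = 1 then 1
  else 0

/-- `O_d`: the number of finite O-sequences of multiplicity `d`. -/
noncomputable def countOd (d : ℕ) : ℕ :=
  {h : ℕ → ℕ | IsFiniteOSeq h ∧ mult h = d}.ncard

/-- `A_d`: the number of finite O-sequences of multiplicity `d` whose value at the socle degree
is at least `2`. -/
noncomputable def countAd (d : ℕ) : ℕ :=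
  {h : ℕ → ℕ | IsFiniteOSeq h ∧ mult h = d ∧ 2 ≤ h (socleDeg h)}.ncard



lemma macaulay_succ (a t : ℕ) :
    macaulay a (t + 1) = if a = 0 then 0
      else Nat.choose (maxBinomIdx a (t + 1) + 1) (t + 2) +
        macaulay (a - Nat.choose (maxBinomIdx a (t + 1)) (t + 1)) t := rfl

lemma choose_lt_choose_succ_self {k t : ℕ} (ht : 1 ≤ t) (hk : t ≤ k) :
    Nat.choose k t < Nat.choose (k + 1) t := by
  obtain ⟨s, rfl⟩ : ∃ s, t = s + 1 := ⟨t - 1, by omega⟩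
  rw [Nat.choose_succ_succ']
  have : 0 < Nat.choose k s := Nat.choose_pos (by omega)
  omega

lemma choose_lt_choose_of_lt {k m t : ℕ} (ht : 1 ≤ t) (hk : t ≤ k) (hkm : k < m) :
    Nat.choose k t < Nat.choose m t :=
  lt_of_lt_of_le (choose_lt_choose_succ_self ht hk) (Nat.choose_le_choose t hkm)

lemma le_choose {n t : ℕ} (ht : 1 ≤ t) (htn : t ≤ n) : n - t + 1 ≤ Nat.choose n t := by
  induction t generalizing n with
  | zero => omega
  | succ t ih =>
    rcases Nat.eq_zero_or_pos t with rfl | ht'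
    · rw [Nat.choose_one_right]; omega
    · obtain ⟨m, rfl⟩ : ∃ m, n = m + 1 := ⟨n - 1, by omega⟩
      rw [Nat.choose_succ_succ']
      have := ih (n := m) ht' (by omega)
      omega

lemma macaulay_zero (t : ℕ) : macaulay 0 t = 0 := by
  cases t <;> simp [macaulay]

/-- Characterization of `maxBinomIdx` for `a ≥ 1`, `t ≥ 1`. -/
lemma maxBinomIdx_spec {a t : ℕ} (ha : 1 ≤ a) (ht : 1 ≤ t) :
    t ≤ maxBinomIdx a t ∧ Nat.choose (maxBinomIdx a t) t ≤ a ∧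
      a < Nat.choose (maxBinomIdx a t + 1) t := by
  set s := (Finset.range (a + t + 1)).filter fun k => Nat.choose k t ≤ a with hs
  have hsup : maxBinomIdx a t = s.sup id := rfl
  have hts : t ∈ s := by
    simp only [hs, Finset.mem_filter, Finset.mem_range]
    refine ⟨by omega, by rw [Nat.choose_self]; omega⟩
  have hne : s.Nonempty := ⟨t, hts⟩
  have hKt : t ≤ maxBinomIdx a t := by
    have := Finset.le_sup (f := id) hts
    rw [← hsup] at this; exact this
  obtain ⟨b, hb, hbe⟩ := Finset.exists_mem_eq_sup s hne id
  have hKs : maxBinomIdx a t ∈ s := by rw [hsup, hbe]; exact hb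
  have hK1 : Nat.choose (maxBinomIdx a t) t ≤ a := (Finset.mem_filter.1 hKs).2
  refine ⟨hKt, hK1, ?_⟩
  by_contra hcon
  push_neg at hcon
  have hlb : maxBinomIdx a t + 1 - t + 1 ≤ Nat.choose (maxBinomIdx a t + 1) t :=
    le_choose ht (by omega)
  have hKrange : maxBinomIdx a t + 1 < a + t + 1 := by omega
  have hmem : maxBinomIdx a t + 1 ∈ s := by
    simp only [hs, Finset.mem_filter, Finset.mem_range]
    exact ⟨hKrange, hcon⟩
  have hle : id (maxBinomIdx a t + 1) ≤ s.sup id := Finset.le_sup hmem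
  rw [← hsup] at hle
  simp only [id] at hle
  omega

/-- Strict Macaulay bound: if `a < C(m,t)` then `a^{⟨t⟩} < C(m+1,t+1)`. -/
lemma macaulay_lt {t a m : ℕ} (h : a < Nat.choose m t) :
    macaulay a t < Nat.choose (m + 1) (t + 1) := by
  induction t generalizing a m with
  | zero =>
    have : 0 < m + 1 := by omega
    simpa [macaulay, Nat.choose_one_right] using this
  | succ t ih =>
    rcases Nat.eq_zero_or_pos a with rfl | ha
    · have hm : t + 1 ≤ m := by
        by_contra hc; push_neg at hc
        rw [Nat.choose_eq_zero_of_lt hc] at h; omega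
      have : 0 < Nat.choose (m + 1) (t + 2) := Nat.choose_pos (by omega)
      simpa [macaulay_zero] using this
    · obtain ⟨hKt, hK1, hK2⟩ := maxBinomIdx_spec ha (show 1 ≤ t + 1 by omega)
      set K := maxBinomIdx a (t + 1) with hKdef
      have hKm : K < m := by
        by_contra hc; push_neg at hc
        have := Nat.choose_le_choose (t + 1) hc
        omega
      have hpascal : Nat.choose (K + 1) (t + 1) = Nat.choose K t + Nat.choose K (t + 1) :=
        Nat.choose_succ_succ' K t
      have hr : a - Nat.choose K (t + 1) < Nat.choose K t := by omega
      have hrec := ih hr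
      have e1 : Nat.choose (K + 1 + 1) (t + 1 + 1) = Nat.choose (K + 2) (t + 2) := rfl
      have e2 : Nat.choose (m + 1) (t + 1 + 1) = Nat.choose (m + 1) (t + 2) := rfl
      have h1 : Nat.choose (K + 1) (t + 1) + Nat.choose (K + 1) (t + 1 + 1) =
          Nat.choose (K + 1 + 1) (t + 1 + 1) := (Nat.choose_succ_succ' (K + 1) (t + 1)).symm
      rw [e1] at h1
      have e3 : Nat.choose (K + 1) (t + 1 + 1) = Nat.choose (K + 1) (t + 2) := rfl
      rw [e3] at h1
      have h2 : Nat.choose (K + 2) (t + 2) ≤ Nat.choose (m + 1) (t + 2) :=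
        Nat.choose_le_choose _ (by omega)
      rw [macaulay_succ, if_neg (show ¬ a = 0 by omega), ← hKdef]
      have e4 : Nat.choose (m + 1) (t + 1 + 1) = Nat.choose (m + 1) (t + 2) := rfl
      rw [e4]
      omega

/-- `(C(m,t))^{⟨t⟩} = C(m+1,t+1)` for `1 ≤ t ≤ m`. -/
lemma macaulay_choose {t m : ℕ} (ht : 1 ≤ t) (htm : t ≤ m) :
    macaulay (Nat.choose m t) t = Nat.choose (m + 1) (t + 1) := by
  have ha : 1 ≤ Nat.choose m t := Nat.choose_pos htm
  have hmax : maxBinomIdx (Nat.choose m t) t = m := by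
    obtain ⟨hKt, hK1, hK2⟩ := maxBinomIdx_spec ha ht
    rcases Nat.lt_trichotomy (maxBinomIdx (Nat.choose m t) t) m with hlt | heq | hgt
    · exfalso
      have := Nat.choose_le_choose t (show maxBinomIdx (Nat.choose m t) t + 1 ≤ m by omega)
      omega
    · exact heq
    · exfalso
      have := choose_lt_choose_of_lt ht htm hgt
      omega
  obtain ⟨t', rfl⟩ : ∃ t', t = t' + 1 := ⟨t - 1, by omega⟩
  rw [macaulay_succ, if_neg (show ¬ Nat.choose m (t' + 1) = 0 by omega), hmax,
    Nat.sub_self, macaulay_zero, Nat.add_zero]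

namespace OSeq

variable {h : ℕ → ℕ}

lemma zero_mono (hO : IsFiniteOSeq h) {t t' : ℕ} (h0 : h t = 0) (htt : t ≤ t') : h t' = 0 := by
  induction t' with
  | zero => exact (Nat.le_zero.1 htt) ▸ h0
  | succ u ih =>
    rcases Nat.lt_or_ge u t with hu | hu
    · have : t = u + 1 := by omega
      exact this ▸ h0
    · exact hO.2.1 u (ih hu)

lemma socle_bddAbove (hO : IsFiniteOSeq h) : BddAbove {t | h t ≠ 0} := by
  obtain ⟨N, hN⟩ := hO.2.2.1
  exact ⟨N, fun t ht => by by_contra hc; exact ht (hN t (by omega))⟩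

lemma socle_mem (hO : IsFiniteOSeq h) : h (socleDeg h) ≠ 0 :=
  Nat.sSup_mem ⟨0, by simp [hO.1]⟩ (socle_bddAbove hO)

lemma zero_of_socle_lt (hO : IsFiniteOSeq h) {t : ℕ} (ht : socleDeg h < t) : h t = 0 := by
  by_contra hc
  have : t ≤ socleDeg h := le_csSup (socle_bddAbove hO) (show t ∈ {t | h t ≠ 0} from hc)
  omega

lemma ne_zero_of_le_socle (hO : IsFiniteOSeq h) {t : ℕ} (ht : t ≤ socleDeg h) : h t ≠ 0 :=
  fun h0 => socle_mem hO (zero_mono hO h0 ht)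

lemma mult_eq_sum (hO : IsFiniteOSeq h) :
    mult h = ∑ t ∈ Finset.range (socleDeg h + 1), h t := by
  apply finsum_eq_sum_of_support_subset
  intro t ht
  simp only [Finset.coe_range, Set.mem_Iio]
  by_contra hc
  exact ht (zero_of_socle_lt hO (by omega))

lemma socle_lt_mult (hO : IsFiniteOSeq h) : socleDeg h + 1 ≤ mult h := by
  rw [mult_eq_sum hO]
  calc socleDeg h + 1 = ∑ t ∈ Finset.range (socleDeg h + 1), 1 := by simp
    _ ≤ _ := Finset.sum_le_sum fun i hi => by
        have := ne_zero_of_le_socle hO (show i ≤ socleDeg h by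
          simpa using Nat.lt_succ_iff.1 (Finset.mem_range.1 hi))
        omega

lemma le_mult (hO : IsFiniteOSeq h) (t : ℕ) : h t ≤ mult h := by
  rcases le_or_gt t (socleDeg h) with ht | ht
  · rw [mult_eq_sum hO]
    exact Finset.single_le_sum (f := h) (fun i _ => Nat.zero_le _)
      (Finset.mem_range.2 (by omega))
  · rw [zero_of_socle_lt hO ht]; exact Nat.zero_le _

/-- Local growth bound plus strictness propagation, one step. -/
lemma growth_step (hO : IsFiniteOSeq h) (hp : 1 ≤ h 1) {t : ℕ} (ht : 1 ≤ t)
    (hb : h t ≤ Nat.choose (h 1 - 1 + t) t) :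
    h (t + 1) ≤ Nat.choose (h 1 - 1 + (t + 1)) (t + 1) ∧
      (h t < Nat.choose (h 1 - 1 + t) t →
        h (t + 1) < Nat.choose (h 1 - 1 + (t + 1)) (t + 1)) := by
  have hm : h 1 - 1 + t + 1 = h 1 - 1 + (t + 1) := by omega
  have hmac := hO.2.2.2 t ht
  rcases Nat.lt_or_ge (h t) (Nat.choose (h 1 - 1 + t) t) with hlt | hge
  · have := macaulay_lt (m := h 1 - 1 + t) hlt
    rw [hm] at this
    exact ⟨by omega, fun _ => by omega⟩
  · have heq : h t = Nat.choose (h 1 - 1 + t) t := le_antisymm hb hge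
    have := macaulay_choose ht (show t ≤ h 1 - 1 + t by omega)
    rw [hm] at this
    rw [heq, this] at hmac
    exact ⟨hmac, fun hc => absurd heq (by omega)⟩

lemma growth (hO : IsFiniteOSeq h) (hp : 1 ≤ h 1) :
    ∀ t, 1 ≤ t → h t ≤ Nat.choose (h 1 - 1 + t) t := by
  intro t ht
  induction t with
  | zero => omega
  | succ u ih =>
    rcases Nat.eq_zero_or_pos u with rfl | hu
    · rw [show h 1 - 1 + (0 + 1) = h 1 by omega]
      rw [Nat.choose_one_right]
    · exact (growth_step hO hp hu (ih hu)).1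

lemma strict_propagate (hO : IsFiniteOSeq h) (hp : 1 ≤ h 1) {t : ℕ} (ht : 1 ≤ t)
    (hlt : h t < Nat.choose (h 1 - 1 + t) t) :
    ∀ u, t ≤ u → h u < Nat.choose (h 1 - 1 + u) u := by
  intro u hu
  induction u with
  | zero => omega
  | succ v ih =>
    rcases Nat.lt_or_ge v t with hv | hv
    · have : t = v + 1 := by omega
      exact this ▸ hlt
    · exact (growth_step hO hp (by omega) (growth hO hp v (by omega))).2 (ih hv)

end OSeq

open OSeq

lemma macaulay_one {t : ℕ} (ht : 1 ≤ t) : macaulay 1 t = 1 := by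
  have h1 := macaulay_choose ht (le_refl t)
  rwa [Nat.choose_self, Nat.choose_self] at h1

/-- The index below which an O-sequence agrees with the maximal growth `C(p-1+i,i)`. -/
noncomputable def eqIdx (h : ℕ → ℕ) : ℕ := sSup {t | h t = Nat.choose (h 1 - 1 + t) t}

section EqIdx
variable {h : ℕ → ℕ}

lemma eqIdx_one_mem (hp : 1 ≤ h 1) : 1 ∈ {t | h t = Nat.choose (h 1 - 1 + t) t} := by
  simp only [Set.mem_setOf_eq]
  rw [show h 1 - 1 + 1 = h 1 by omega, Nat.choose_one_right]

lemma eqIdx_bdd (hO : IsFiniteOSeq h) (hp : 1 ≤ h 1) :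
    BddAbove {t | h t = Nat.choose (h 1 - 1 + t) t} := by
  obtain ⟨N, hN⟩ := hO.2.2.1
  refine ⟨N, fun t ht => ?_⟩
  by_contra hc
  push_neg at hc
  have h0 : h t = 0 := hN t (by omega)
  have hpos : 0 < Nat.choose (h 1 - 1 + t) t := Nat.choose_pos (by omega)
  simp only [Set.mem_setOf_eq] at ht
  omega

lemma one_le_eqIdx (hO : IsFiniteOSeq h) (hp : 1 ≤ h 1) : 1 ≤ eqIdx h :=
  le_csSup (eqIdx_bdd hO hp) (eqIdx_one_mem hp)

lemma eqIdx_mem (hO : IsFiniteOSeq h) (hp : 1 ≤ h 1) :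
    h (eqIdx h) = Nat.choose (h 1 - 1 + eqIdx h) (eqIdx h) :=
  Nat.sSup_mem ⟨1, eqIdx_one_mem hp⟩ (eqIdx_bdd hO hp)

lemma eq_of_le_eqIdx (hO : IsFiniteOSeq h) (hp : 1 ≤ h 1) {i : ℕ} (hi : i ≤ eqIdx h) :
    h i = Nat.choose (h 1 - 1 + i) i := by
  rcases Nat.eq_zero_or_pos i with rfl | hi1
  · rw [Nat.add_zero, Nat.choose_zero_right]; exact hO.1
  · by_contra hc
    have hlt : h i < Nat.choose (h 1 - 1 + i) i :=
      lt_of_le_of_ne (growth hO hp i hi1) hc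
    have := strict_propagate hO hp hi1 hlt (eqIdx h) hi
    have heq := eqIdx_mem hO hp
    omega

lemma lt_of_eqIdx_lt (hO : IsFiniteOSeq h) (hp : 1 ≤ h 1) {i : ℕ} (hi : eqIdx h < i) :
    h i < Nat.choose (h 1 - 1 + i) i := by
  have hle := growth hO hp i (by have := one_le_eqIdx hO hp; omega)
  rcases lt_or_eq_of_le hle with hlt | heq
  · exact hlt
  · exfalso
    have : i ≤ eqIdx h := le_csSup (eqIdx_bdd hO hp) (by exact heq)
    omega

end EqIdx

/-- The all-ones sequence of length `d`. -/
def ones (d : ℕ) : ℕ → ℕ := fun t => if t < d then 1 else 0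

def Sset (d : ℕ) : Set (ℕ → ℕ) := {h | IsFiniteOSeq h ∧ mult h = d}

def Tset (d p k : ℕ) : Set (ℕ → ℕ) :=
  {h | IsFiniteOSeq h ∧ mult h = d ∧ socleDeg h ≤ d - 1 ∧
    (∀ i, i ≤ k → h i = Nat.choose (p - 1 + i) i) ∧
    (∀ i, k < i → h i < Nat.choose (p - 1 + i) i)}

lemma ones_isOSeq {d : ℕ} (hd : 1 ≤ d) : IsFiniteOSeq (ones d) := by
  refine ⟨by simp only [ones]; rw [if_pos (by omega)], fun t ht => ?_, ⟨d, fun t ht => ?_⟩, fun t ht => ?_⟩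
  · simp only [ones] at ht ⊢
    split at ht
    · omega
    · rw [if_neg (by omega)]
  · simp only [ones]; rw [if_neg (by omega)]
  · simp only [ones]
    rcases Nat.lt_or_ge t d with htd | htd
    · rw [if_pos htd, macaulay_one ht]
      split <;> omega
    · rw [if_neg (by omega), if_neg (by omega), macaulay_zero]

lemma mult_ones {d : ℕ} : mult (ones d) = d := by
  have : mult (ones d) = ∑ t ∈ Finset.range d, ones d t := by
    apply finsum_eq_sum_of_support_subset
    intro t ht
    simp only [Finset.coe_range, Set.mem_Iio]
    by_contra hc
    exact ht (by simp only [ones]; rw [if_neg (by omega)])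
  rw [this]
  rw [Finset.sum_congr rfl (fun i hi => by
    simp only [ones]; rw [if_pos (Finset.mem_range.1 hi)])]
  simp

lemma ones_mem {d : ℕ} (hd : 1 ≤ d) : ones d ∈ Sset d := ⟨ones_isOSeq hd, mult_ones⟩

lemma Sset_finite {d : ℕ} (hd : 1 ≤ d) : (Sset d).Finite := by
  have hzero : ∀ h ∈ Sset d, ∀ t, d ≤ t → h t = 0 := by
    intro h hh t htd
    have hs := socle_lt_mult hh.1
    rw [hh.2] at hs
    exact zero_of_socle_lt hh.1 (by omega)
  have hle : ∀ h ∈ Sset d, ∀ t, h t ≤ d := by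
    intro h hh t
    have := le_mult hh.1 t
    rw [hh.2] at this
    exact this
  have : Finite (Sset d) := by
    apply Finite.of_injective (f := fun h : Sset d => fun i : Fin d => (⟨h.1 i, by
      have := hle h.1 h.2 i
      omega⟩ : Fin (d + 1)))
    intro a b hab
    apply Subtype.ext
    funext t
    rcases Nat.lt_or_ge t d with htd | htd
    · have := congrFun hab ⟨t, htd⟩
      simpa using this
    · rw [hzero a.1 a.2 t htd, hzero b.1 b.2 t htd]
  exact Set.toFinite _

section Classify
variable {h : ℕ → ℕ} {d : ℕ}

lemma h1_pos (hd : 2 ≤ d) (hh : h ∈ Sset d) : 1 ≤ h 1 := by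
  by_contra hc
  push_neg at hc
  have h10 : h 1 = 0 := by omega
  have hs : socleDeg h = 0 := by
    by_contra hs
    exact socle_mem hh.1 (zero_mono hh.1 h10 (by omega))
  have := mult_eq_sum hh.1
  rw [hs, hh.2] at this
  simp [hh.1.1] at this
  omega

lemma h1_le (hh : h ∈ Sset d) (hp2 : 2 ≤ h 1) : h 1 ≤ d - 1 := by
  have hs1 : 1 ≤ socleDeg h :=
    le_csSup (socle_bddAbove hh.1) (show 1 ∈ {t | h t ≠ 0} by simp; omega)
  have hsum := mult_eq_sum hh.1
  have hsub : ({0, 1} : Finset ℕ) ⊆ Finset.range (socleDeg h + 1) := by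
    intro x hx
    simp only [Finset.mem_insert, Finset.mem_singleton] at hx
    rcases hx with rfl | rfl <;> simp [Finset.mem_range] <;> omega
  have hle : ∑ t ∈ ({0, 1} : Finset ℕ), h t ≤ ∑ t ∈ Finset.range (socleDeg h + 1), h t :=
    Finset.sum_le_sum_of_subset hsub
  rw [Finset.sum_pair (by omega)] at hle
  rw [hh.2] at hsum
  have h0 := hh.1.1
  omega

lemma eqIdx_le_socle (hh : h ∈ Sset d) (hp : 1 ≤ h 1) : eqIdx h ≤ socleDeg h := by
  apply le_csSup (socle_bddAbove hh.1)
  have := eqIdx_mem hh.1 hp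
  have hpos : 0 < Nat.choose (h 1 - 1 + eqIdx h) (eqIdx h) := Nat.choose_pos (by omega)
  simp only [Set.mem_setOf_eq]
  omega

lemma eqIdx_le (hd : 3 ≤ d) (hh : h ∈ Sset d) (hp2 : 2 ≤ h 1) : eqIdx h ≤ d - 2 := by
  have hp : 1 ≤ h 1 := by omega
  set k := eqIdx h with hk
  have hks : k ≤ socleDeg h := eqIdx_le_socle hh hp
  have hsum := mult_eq_sum hh.1
  rw [hh.2] at hsum
  have hsub : Finset.range (k + 1) ⊆ Finset.range (socleDeg h + 1) := by
    intro x hx; simp only [Finset.mem_range] at *; omega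
  have hge : ∑ t ∈ Finset.range (k + 1), h t ≤ d := by
    rw [hsum]; exact Finset.sum_le_sum_of_subset hsub
  have hterm : ∀ i ∈ Finset.range (k + 1), (if i = 0 then 1 else 2) ≤ h i := by
    intro i hi
    simp only [Finset.mem_range] at hi
    rcases Nat.eq_zero_or_pos i with rfl | hi1
    · simp [hh.1.1]
    · rw [if_neg (by omega)]
      have heq : h i = Nat.choose (h 1 - 1 + i) i := eq_of_le_eqIdx hh.1 hp (by omega)
      have hlb : h 1 - 1 + i - i + 1 ≤ Nat.choose (h 1 - 1 + i) i := le_choose hi1 (by omega)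
      omega
  have hlow : ∑ i ∈ Finset.range (k + 1), (if i = 0 then 1 else 2) ≤
      ∑ i ∈ Finset.range (k + 1), h i := Finset.sum_le_sum hterm
  have hcalc : ∑ i ∈ Finset.range (k + 1), (if i = 0 then (1:ℕ) else 2) = 2 * k + 1 := by
    rw [Finset.sum_range_succ']
    simp
    omega
  omega

lemma mem_Tset_self (hh : h ∈ Sset d) (hp2 : 2 ≤ h 1) :
    h ∈ Tset d (h 1) (eqIdx h) := by
  have hp : 1 ≤ h 1 := by omega
  refine ⟨hh.1, hh.2, ?_, fun i hi => eq_of_le_eqIdx hh.1 hp hi,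
    fun i hi => lt_of_eqIdx_lt hh.1 hp hi⟩
  have := socle_lt_mult hh.1
  rw [hh.2] at this
  omega

lemma eq_ones (hh : h ∈ Sset d) (hp1 : h 1 = 1) : h = ones d := by
  have hb : ∀ t, 1 ≤ t → h t ≤ 1 := by
    intro t ht
    have := growth hh.1 (by omega) t ht
    rw [hp1] at this
    simpa [Nat.choose_self] using this
  have hone : ∀ t, t ≤ socleDeg h → h t = 1 := by
    intro t ht
    rcases Nat.eq_zero_or_pos t with rfl | ht1
    · exact hh.1.1
    · have := ne_zero_of_le_socle hh.1 ht
      have := hb t ht1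
      omega
  have hsum := mult_eq_sum hh.1
  rw [hh.2] at hsum
  have hd' : d = socleDeg h + 1 := by
    rw [hsum, Finset.sum_congr rfl (fun i hi => hone i (by
      simpa using Nat.lt_succ_iff.1 (Finset.mem_range.1 hi)))]
    simp
  funext t
  simp only [ones]
  rcases Nat.lt_or_ge t d with htd | htd
  · rw [if_pos htd]; exact hone t (by omega)
  · rw [if_neg (by omega)]
    exact zero_of_socle_lt hh.1 (by omega)

lemma Tset_h1 {p k : ℕ} (hp : 1 ≤ p) (hk : 1 ≤ k) (hh : h ∈ Tset d p k) : h 1 = p := by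
  have := hh.2.2.2.1 1 hk
  rwa [show p - 1 + 1 = p by omega, Nat.choose_one_right] at this

lemma Tset_eqIdx {p k : ℕ} (hp : 1 ≤ p) (hk : 1 ≤ k) (hh : h ∈ Tset d p k) :
    eqIdx h = k := by
  have h1p := Tset_h1 hp hk hh
  have hmemk : k ∈ {t | h t = Nat.choose (h 1 - 1 + t) t} := by
    simp only [Set.mem_setOf_eq, h1p]
    exact hh.2.2.2.1 k le_rfl
  have hub : ∀ t ∈ {t | h t = Nat.choose (h 1 - 1 + t) t}, t ≤ k := by
    intro t ht
    simp only [Set.mem_setOf_eq, h1p] at ht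
    by_contra hc
    have := hh.2.2.2.2 t (by omega)
    omega
  exact le_antisymm (csSup_le ⟨k, hmemk⟩ hub) (le_csSup ⟨k, hub⟩ hmemk)

end Classify

lemma ncard_biUnion_eq {α β : Type*} (s : Finset β) (f : β → Set α)
    (hfin : ∀ b ∈ s, (f b).Finite)
    (hdisj : ∀ b₁ ∈ s, ∀ b₂ ∈ s, b₁ ≠ b₂ → Disjoint (f b₁) (f b₂)) :
    (⋃ b ∈ s, f b).ncard = ∑ b ∈ s, (f b).ncard := by
  classical
  induction s using Finset.induction_on with
  | empty => simp
  | @insert a s ha ih =>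
    rw [Finset.sum_insert ha]
    have hU : (⋃ b ∈ insert a s, f b) = f a ∪ ⋃ b ∈ s, f b := by
      simp [Set.biUnion_insert]
    have hUfin : (⋃ b ∈ s, f b).Finite :=
      Set.Finite.biUnion s.finite_toSet fun b hb =>
        hfin b (Finset.mem_insert_of_mem hb)
    have hdis : Disjoint (f a) (⋃ b ∈ s, f b) := by
      rw [Set.disjoint_iUnion_right]
      intro b
      rw [Set.disjoint_iUnion_right]
      intro hb
      exact hdisj a (Finset.mem_insert_self a s) b (Finset.mem_insert_of_mem hb)
        (fun hab => ha (hab ▸ hb))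
    rw [hU, Set.ncard_union_eq hdis (hfin a (Finset.mem_insert_self a s)) hUfin,
      ih (fun b hb => hfin b (Finset.mem_insert_of_mem hb))
        (fun b₁ h₁ b₂ h₂ hne => hdisj b₁ (Finset.mem_insert_of_mem h₁)
          b₂ (Finset.mem_insert_of_mem h₂) hne)]

theorem key_count {d : ℕ} (hd : 3 ≤ d) :
    (Sset d).ncard =
      1 + ∑ p ∈ Finset.Icc 2 (d - 1), ∑ k ∈ Finset.Icc 1 (d - 2), (Tset d p k).ncard := by
  classical
  have hTsub : ∀ p k, Tset d p k ⊆ Sset d := fun p k h hh => ⟨hh.1, hh.2.1⟩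
  have hSfin : (Sset d).Finite := Sset_finite (by omega)
  set U : Set (ℕ → ℕ) :=
    ⋃ p ∈ Finset.Icc 2 (d - 1), ⋃ k ∈ Finset.Icc 1 (d - 2), Tset d p k with hUdef
  have hUsub : U ⊆ Sset d := by
    rw [hUdef]
    refine Set.iUnion₂_subset fun p _ => Set.iUnion₂_subset fun k _ => hTsub p k
  have hUfin : U.Finite := hSfin.subset hUsub
  -- membership extraction
  have hmemU : ∀ h ∈ U, h 1 ≠ 1 := by
    intro h hh
    simp only [hUdef, Set.mem_iUnion, exists_prop] at hh
    obtain ⟨p, hp, k, hk, hT⟩ := hh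
    simp only [Finset.mem_Icc] at hp hk
    have := Tset_h1 (by omega) (by omega) hT
    omega
  have hones_notmem : ones d ∉ U := by
    intro hc
    have := hmemU (ones d) hc
    simp only [ones] at this
    rw [if_pos (by omega)] at this
    exact this rfl
  have hsplit : Sset d = insert (ones d) U := by
    ext h
    constructor
    · intro hh
      have hp1 : 1 ≤ h 1 := h1_pos (by omega) hh
      rcases Nat.lt_or_ge (h 1) 2 with hp | hp
      · left
        exact eq_ones hh (by omega)
      · right
        simp only [hUdef, Set.mem_iUnion, exists_prop]
        refine ⟨h 1, ?_, eqIdx h, ?_, mem_Tset_self hh hp⟩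
        · simp only [Finset.mem_Icc]
          exact ⟨hp, h1_le hh hp⟩
        · simp only [Finset.mem_Icc]
          exact ⟨one_le_eqIdx hh.1 hp1, eqIdx_le hd hh hp⟩
    · intro hh
      rcases hh with rfl | hh
      · exact ones_mem (by omega)
      · exact hUsub hh
  rw [hsplit, Set.ncard_insert_of_notMem hones_notmem hUfin, Nat.add_comm]
  congr 1
  -- outer biUnion
  rw [hUdef]
  rw [ncard_biUnion_eq _ _ (fun p hp => hSfin.subset (by
      refine Set.iUnion₂_subset fun k _ => hTsub p k))
    ?_]
  · refine Finset.sum_congr rfl fun p hp => ?_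
    simp only [Finset.mem_Icc] at hp
    refine ncard_biUnion_eq _ _ (fun k hk => hSfin.subset (hTsub p k)) ?_
    intro k₁ h₁ k₂ h₂ hne
    simp only [Finset.mem_Icc] at h₁ h₂
    rw [Set.disjoint_left]
    intro h hT1 hT2
    have e1 := Tset_eqIdx (show 1 ≤ p by omega) (by omega) hT1
    have e2 := Tset_eqIdx (show 1 ≤ p by omega) (by omega) hT2
    omega
  · intro p₁ h₁ p₂ h₂ hne
    simp only [Finset.mem_Icc] at h₁ h₂
    rw [Set.disjoint_left]
    intro h hT1 hT2
    simp only [Set.mem_iUnion, exists_prop] at hT1 hT2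
    obtain ⟨k₁, hk₁, hT1⟩ := hT1
    obtain ⟨k₂, hk₂, hT2⟩ := hT2
    simp only [Finset.mem_Icc] at hk₁ hk₂
    have e1 := Tset_h1 (show 1 ≤ p₁ by omega) (by omega) hT1
    have e2 := Tset_h1 (show 1 ≤ p₂ by omega) (by omega) hT2
    omega

lemma countO_eq {d : ℕ} (hd : 3 ≤ d) {ℓ k : ℤ} (hℓ1 : 1 ≤ ℓ) (hℓ2 : ℓ ≤ (d : ℤ) - 2)
    (hk1 : 1 ≤ k) (hk2 : k ≤ (d : ℤ) - 2) :
    countO ((d : ℤ) - ℓ) ((d : ℤ) - 1) k (d : ℤ) =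
      (Tset d ((d : ℤ) - ℓ).toNat k.toNat).ncard := by
  rw [countO, if_pos (show _ ∧ _ ∧ _ ∧ _ by refine ⟨by omega, by omega, by omega, by omega⟩)]
  congr 1
  ext h
  simp only [Set.mem_setOf_eq, Tset]
  constructor
  · rintro ⟨hO, hm, hs, he, hlt⟩
    exact ⟨hO, by omega, by omega,
      fun i hi => he i (by omega),
      fun i hi => hlt i (by omega)⟩
  · rintro ⟨hO, hm, hs, he, hlt⟩
    exact ⟨hO, by omega, by omega,
      fun i hi => he i (by omega),
      fun i hi => hlt i (by omega)⟩

lemma sum_Icc_int_toNat {M : Type*} [AddCommMonoid M] (a b : ℕ) (f : ℕ → M) :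
    ∑ x ∈ Finset.Icc (a : ℤ) (b : ℤ), f x.toNat = ∑ x ∈ Finset.Icc a b, f x := by
  refine Finset.sum_nbij' (fun x : ℤ => x.toNat) (fun x : ℕ => (x : ℤ)) ?_ ?_ ?_ ?_ ?_
  · intro x hx; simp only [Finset.mem_Icc] at *; omega
  · intro x hx; simp only [Finset.mem_Icc] at *; omega
  · intro x hx; simp only [Finset.mem_Icc] at hx
    show ((x.toNat : ℕ) : ℤ) = x
    omega
  · intro x hx; simp only [Finset.mem_Icc] at hx
    show ((x : ℤ)).toNat = x
    omega
  · intro x hx; rfl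


/-- For every integer `d > 2`,
`O_d = 1 + Σ_{ℓ=1}^{d−2} Σ_{k=1}^{d−2} O(d−ℓ, d−1, k, d)`. -/
theorem stmt11 (d : ℕ) (hd : 2 < d) :
    countOd d =
      1 + ∑ ℓ ∈ Finset.Icc (1 : ℤ) ((d : ℤ) - 2), ∑ k ∈ Finset.Icc (1 : ℤ) ((d : ℤ) - 2),
          countO ((d : ℤ) - ℓ) ((d : ℤ) - 1) k (d : ℤ) := by
  have hd3 : 3 ≤ d := hd
  have hS : countOd d = (Sset d).ncard := rfl
  rw [hS, key_count hd3]
  congr 1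
  -- rewrite each countO to a Tset count
  have hstep1 : ∀ ℓ ∈ Finset.Icc (1 : ℤ) ((d : ℤ) - 2),
      ∑ k ∈ Finset.Icc (1 : ℤ) ((d : ℤ) - 2), countO ((d : ℤ) - ℓ) ((d : ℤ) - 1) k (d : ℤ)
        = ∑ k ∈ Finset.Icc 1 (d - 2), (Tset d ((d : ℤ) - ℓ).toNat k).ncard := by
    intro ℓ hℓ
    simp only [Finset.mem_Icc] at hℓ
    rw [show ((d : ℤ) - 2) = ((d - 2 : ℕ) : ℤ) by omega]
    rw [← sum_Icc_int_toNat 1 (d - 2) (fun k => (Tset d ((d : ℤ) - ℓ).toNat k).ncard)]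
    refine Finset.sum_congr rfl fun k hk => ?_
    simp only [Finset.mem_Icc] at hk
    exact countO_eq hd3 hℓ.1 hℓ.2 (by omega) (by omega)
  rw [Finset.sum_congr rfl hstep1]
  refine (Finset.sum_nbij' (i := fun ℓ : ℤ => ((d : ℤ) - ℓ).toNat)
    (j := fun p : ℕ => (d : ℤ) - (p : ℤ)) ?_ ?_ ?_ ?_ ?_).symm
  · intro x hx; simp only [Finset.mem_Icc] at *; omega
  · intro x hx; simp only [Finset.mem_Icc] at *; omega
  · intro x hx; simp only [Finset.mem_Icc] at *; omega
  · intro x hx; simp only [Finset.mem_Icc] at *; omega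
  · intro x hx; rfl
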